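/- arXiv:2512.22330 — 5 statements merged into one kernel-verified Lean document; each statement's English description precedes it below -/
import Mathlib

section
/- For integers n ≥ 2 and 1 ≤ j ≤ n/2, π(j,n) ≥ exp(-j²/n - 2j³/n²). -/
/-!
Every factor satisfies `(n + ℓ - j) / (n + ℓ) = 1 - j / (n + ℓ) ≥ 1 - j / n`, so the product is at
least `(1 - x) ^ j` with `x = j / n ≤ 1 / 2`. For `x ≤ 1 / 2` one has `1 - x ≥ exp (-x - 2 x²)`, and
`j (x + 2 x²) = j² / n + 2 j³ / n²`.
-/

/-- The identity `(1 - x) (1 + x + 2 x²) = 1 + x² (1 - 2 x)` together with `1 + y ≤ exp y`. -/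
theorem Real.exp_neg_sub_two_mul_sq_le_one_sub {x : ℝ} (hx : x ≤ 1 / 2) :
    Real.exp (-x - 2 * x ^ 2) ≤ 1 - x := by
  have hy : 0 < 1 + (x + 2 * x ^ 2) := by nlinarith [sq_nonneg (x + 1 / 4)]
  calc Real.exp (-x - 2 * x ^ 2) = (Real.exp (x + 2 * x ^ 2))⁻¹ := by rw [← Real.exp_neg]; ring_nf
    _ ≤ (1 + (x + 2 * x ^ 2))⁻¹ := inv_anti₀ hy (by linarith [Real.add_one_le_exp (x + 2 * x ^ 2)])
    _ ≤ 1 - x := by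
        rw [inv_le_iff_one_le_mul₀ hy]
        nlinarith [mul_nonneg (sq_nonneg x) (by linarith : 0 ≤ 1 - 2 * x)]

theorem pow_card_le_prod_add_sub_div (s : Finset ℕ) {a c : ℝ} (ha : 0 < a) (hc : 0 ≤ c)
    (hca : c ≤ a) : (1 - c / a) ^ s.card ≤ ∏ ℓ ∈ s, (a + ℓ - c) / (a + ℓ) := by
  rw [← Finset.prod_const]
  refine Finset.prod_le_prod (fun _ _ => by rw [sub_nonneg, div_le_one ha]; exact hca) ?_
  intro ℓ _
  have hℓ : 0 < a + ℓ := by positivity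
  rw [sub_div, div_self hℓ.ne']
  gcongr
  exact le_add_of_nonneg_right (Nat.cast_nonneg ℓ)

theorem stmt_6_general (n j : ℕ) (hj1 : 1 ≤ j) (hjn : 2 * j ≤ n) :
    ∏ ℓ ∈ Finset.Icc 1 j, ((n : ℝ) + ℓ - j) / ((n : ℝ) + ℓ) ≥
      Real.exp (-(j : ℝ) ^ 2 / n - 2 * (j : ℝ) ^ 3 / (n : ℝ) ^ 2) := by
  have hn : (0 : ℝ) < n := by exact_mod_cast (by omega : 0 < n)
  have hjn' : (2 : ℝ) * j ≤ n := by exact_mod_cast hjn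
  have hx : (j : ℝ) / n ≤ 1 / 2 := by rw [div_le_iff₀ hn]; linarith
  calc Real.exp (-(j : ℝ) ^ 2 / n - 2 * (j : ℝ) ^ 3 / (n : ℝ) ^ 2)
      = Real.exp (-(j / n) - 2 * (j / n) ^ 2) ^ j := by
        rw [← Real.exp_nat_mul]; congr 1; field_simp
    _ ≤ (1 - j / n) ^ j :=
        pow_le_pow_left₀ (Real.exp_pos _).le (Real.exp_neg_sub_two_mul_sq_le_one_sub hx) j
    _ ≤ ∏ ℓ ∈ Finset.Icc 1 j, ((n : ℝ) + ℓ - j) / ((n : ℝ) + ℓ) := by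
        simpa using pow_card_le_prod_add_sub_div (Finset.Icc 1 j) hn (Nat.cast_nonneg j)
          (by linarith)

theorem stmt_6 (n j : ℕ) (hn : 2 ≤ n) (hj1 : 1 ≤ j) (hjn : 2 * j ≤ n) :
    ∏ ℓ ∈ Finset.Icc 1 j, ((n : ℝ) + ℓ - j) / ((n : ℝ) + ℓ) ≥
      Real.exp (-(j : ℝ) ^ 2 / n - 2 * (j : ℝ) ^ 3 / (n : ℝ) ^ 2) :=
  stmt_6_general n j hj1 hjn
end

section
/- For integers n ≥ 1 and real j ≥ 1 (j an integer), C(2n, n+j)/4^n ≤ C(2n,n)/4^n · exp(-j²/(n+j)). -/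
/-! Moving from `n + j` to `n + j + 1` multiplies `C(2n, ·)` by
`(n - j) / (n + j + 1) = 1 - (2j + 1) / (n + j + 1) ≤ exp (-(2j + 1) / (n + j + 1))`,
and `j² / (n + j) + (2j + 1) / (n + j + 1) ≥ (j + 1)² / (n + j + 1)`, so the bound follows by
induction on `j`; beyond `j = n` the left side vanishes. -/

open Real

theorem Nat.cast_choose_succ_right {K : Type*} [Field K] [CharZero K] {m k : ℕ} (hk : k ≤ m) :
    (m.choose (k + 1) : K) = m.choose k * ((m - k) / (k + 1)) := by
  have h := congrArg (Nat.cast : ℕ → K) (Nat.choose_succ_right_eq m k)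
  push_cast [Nat.cast_sub hk] at h
  field_simp
  exact h

theorem sub_div_le_exp_neg_div {a b : ℝ} (hb : 0 < b) : (b - a) / b ≤ exp (-a / b) := by
  rw [sub_div, div_self hb.ne', neg_div]
  exact one_sub_le_exp_neg _

theorem add_one_sq_div_le {x s : ℝ} (hs : 0 < s) :
    (x + 1) ^ 2 / (s + 1) ≤ x ^ 2 / s + (2 * x + 1) / (s + 1) := by
  have hmono : x ^ 2 / (s + 1) ≤ x ^ 2 / s :=
    div_le_div_of_nonneg_left (sq_nonneg x) hs (by linarith)
  calc (x + 1) ^ 2 / (s + 1) = x ^ 2 / (s + 1) + (2 * x + 1) / (s + 1) := by ring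
    _ ≤ x ^ 2 / s + (2 * x + 1) / (s + 1) := by gcongr

theorem cast_choose_two_mul_add_le (n j : ℕ) :
    ((2 * n).choose (n + j) : ℝ) ≤ (2 * n).choose n * exp (-(j : ℝ) ^ 2 / (n + j)) := by
  induction j with
  | zero => simp
  | succ j ih =>
    rcases le_or_gt n j with hnj | hjn
    · rw [Nat.choose_eq_zero_of_lt (by omega), Nat.cast_zero]
      positivity
    have hpos : (0 : ℝ) < n + j := by
      have : (0 : ℝ) < n := by exact_mod_cast (by omega : 0 < n)
      positivity
    have hratio : ((2 * n).choose (n + (j + 1)) : ℝ)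
        = (2 * n).choose (n + j) * (((n + j + 1 : ℝ) - (2 * j + 1)) / (n + j + 1)) := by
      rw [← add_assoc, Nat.cast_choose_succ_right (by omega)]
      push_cast
      ring_nf
    have hstep := sub_div_le_exp_neg_div (a := 2 * (j : ℝ) + 1) (by positivity : (0 : ℝ) < n + j + 1)
    have hexp : -(j : ℝ) ^ 2 / (n + j) + -(2 * j + 1) / (n + j + 1)
        ≤ -((j + 1 : ℕ) : ℝ) ^ 2 / (n + (j + 1 : ℕ)) := by
      have := add_one_sq_div_le (x := (j : ℝ)) hpos
      push_cast
      rw [← add_assoc, neg_div, neg_div, neg_div]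
      linarith
    have hfac : (0 : ℝ) ≤ ((n + j + 1 : ℝ) - (2 * j + 1)) / (n + j + 1) := by
      have : (j : ℝ) + 1 ≤ n := by exact_mod_cast hjn
      apply div_nonneg <;> linarith
    calc ((2 * n).choose (n + (j + 1)) : ℝ)
        ≤ (2 * n).choose n * exp (-(j : ℝ) ^ 2 / (n + j)) * exp (-(2 * j + 1) / (n + j + 1)) := by
          rw [hratio]
          exact mul_le_mul ih hstep hfac (by positivity)
      _ = (2 * n).choose n * exp (-(j : ℝ) ^ 2 / (n + j) + -(2 * j + 1) / (n + j + 1)) := by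
          rw [mul_assoc, ← exp_add]
      _ ≤ _ := mul_le_mul_of_nonneg_left (exp_le_exp.mpr hexp) (by positivity)

theorem stmt_7_general (n j : ℕ) :
    ((2 * n).choose (n + j) : ℝ) / 4 ^ n ≤
      ((2 * n).choose n : ℝ) / 4 ^ n * Real.exp (-(j : ℝ) ^ 2 / ((n : ℝ) + j)) := by
  rw [div_mul_eq_mul_div]
  gcongr
  exact cast_choose_two_mul_add_le n j

theorem stmt_7 (n j : ℕ) (hn : 1 ≤ n) (hj1 : 1 ≤ j) (hjn : j ≤ n) :
    ((2 * n).choose (n + j) : ℝ) / 4 ^ n ≤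
      ((2 * n).choose n : ℝ) / 4 ^ n * Real.exp (-(j : ℝ) ^ 2 / ((n : ℝ) + j)) :=
  stmt_7_general n j
end

section
/- For all integers n ≥ 1, 1 ≤ √((n+1/2)·π) · C(2n,n)/4^n ≤ √(1 + 1/(2n)). -/
/-!
Mathlib's Wallis product `W n` satisfies `(2n+1)/(2n+2) · π/2 ≤ W n ≤ π/2`, and by
`W_eq_factorial_ratio` it equals `1 / ((2n+1) c²)` with `c = C(2n,n)/4ⁿ`. Hence
`(n + 1/2) π c² = (π/2) / W n` lies between `1` and `(2n+2)/(2n+1) ≤ 1 + 1/(2n)`;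
take square roots.
-/

open Real Real.Wallis

lemma two_mul_add_one_mul_sq_choose_div_four_pow_mul_W (n : ℕ) :
    ((2 * n : ℝ) + 1) * (((2 * n).choose n : ℝ) / 4 ^ n) ^ 2 * W n = 1 := by
  rw [Nat.cast_choose ℝ (by omega : n ≤ 2 * n), show 2 * n - n = n by omega,
    W_eq_factorial_ratio, show (2 : ℝ) ^ (4 * n) = ((4 : ℝ) ^ n) ^ 2 by
      rw [← pow_mul, show (4 : ℝ) = 2 ^ 2 by norm_num, ← pow_mul]; ring_nf]
  field_simp

lemma add_half_mul_pi_mul_sq_choose_div_four_pow (n : ℕ) :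
    ((n : ℝ) + 1 / 2) * π * (((2 * n).choose n : ℝ) / 4 ^ n) ^ 2 = π / 2 / W n := by
  rw [eq_div_iff (W_pos n).ne']
  linear_combination (π / 2) * two_mul_add_one_mul_sq_choose_div_four_pow_mul_W n

lemma one_le_pi_div_two_div_W (n : ℕ) : 1 ≤ π / 2 / W n := by
  rw [one_le_div (W_pos n)]
  exact W_le n

lemma pi_div_two_div_W_le (n : ℕ) : π / 2 / W n ≤ 1 + 1 / (2 * n + 1) := by
  have hlow := le_W n
  rw [div_le_iff₀ (W_pos n)]
  calc π / 2 = (1 + 1 / (2 * n + 1)) * ((2 * n + 1) / (2 * n + 2) * (π / 2)) := by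
        field_simp; ring
    _ ≤ (1 + 1 / (2 * n + 1)) * W n := by gcongr

theorem stmt_12 (n : ℕ) (hn : 1 ≤ n) :
    1 ≤ Real.sqrt (((n : ℝ) + 1 / 2) * Real.pi) * (((2 * n).choose n : ℝ) / 4 ^ n) ∧
    Real.sqrt (((n : ℝ) + 1 / 2) * Real.pi) * (((2 * n).choose n : ℝ) / 4 ^ n) ≤
      Real.sqrt (1 + 1 / (2 * n : ℝ)) := by
  have hsqrt : √(((n : ℝ) + 1 / 2) * π) * (((2 * n).choose n : ℝ) / 4 ^ n) =
      √(π / 2 / W n) := by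
    rw [← add_half_mul_pi_mul_sq_choose_div_four_pow,
      sqrt_mul (by positivity : (0 : ℝ) ≤ (n + 1 / 2) * π), sqrt_sq (by positivity)]
  rw [hsqrt]
  refine ⟨one_le_sqrt.2 (one_le_pi_div_two_div_W n), sqrt_le_sqrt ?_⟩
  calc π / 2 / W n ≤ 1 + 1 / (2 * n + 1) := pi_div_two_div_W_le n
    _ ≤ 1 + 1 / (2 * n) := by gcongr; linarith
end

section
/- For all integers n ≥ 1, 1/√(1+1/(2n)) ≤ √(nπ) · C(2n,n)/4^n ≤ 1. -/
/-!
The Wallis partial product `W n` equals `1 / ((2n + 1) c_n²)`, where `c_n = C(2n,n) / 4^n`, and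
comparing `∫ sin^(2n+1)` with `∫ sin^(2n)` and `∫ sin^(2n+2)` gives
`(2n+1)/(2n+2) · π/2 ≤ W n ≤ π/2`. Solving these for `n π c_n²` gives
`2n/(2n+1) ≤ n π c_n² ≤ 4n(n+1)/(2n+1)² ≤ 1`.
-/

open Real Real.Wallis
open scoped Nat

noncomputable def centralBinomProb (n : ℕ) : ℝ := ((2 * n).choose n : ℝ) / 4 ^ n

theorem centralBinomProb_pos (n : ℕ) : 0 < centralBinomProb n := by
  unfold centralBinomProb
  have := Nat.choose_pos (Nat.le_mul_of_pos_left n two_pos)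
  positivity

theorem W_mul_centralBinomProb_sq (n : ℕ) :
    W n * ((2 * n + 1) * centralBinomProb n ^ 2) = 1 := by
  have hfact : ((2 * n).choose n : ℝ) * n ! * n ! = (2 * n)! := by
    rw [two_mul]; exact_mod_cast Nat.add_choose_mul_factorial_mul_factorial n n
  have hchoose : ((2 * n).choose n : ℝ) ≠ 0 := by
    exact_mod_cast (Nat.choose_pos (Nat.le_mul_of_pos_left n two_pos)).ne'
  rw [W_eq_factorial_ratio, centralBinomProb, ← hfact, show (4 : ℝ) ^ n = 2 ^ (2 * n) by
    rw [pow_mul]; norm_num]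
  field_simp
  ring

theorem two_mul_div_le_mul_pi_mul_centralBinomProb_sq (n : ℕ) :
    2 * n / (2 * n + 1) ≤ n * π * centralBinomProb n ^ 2 := by
  have h : 2 ≤ π * ((2 * n + 1) * centralBinomProb n ^ 2) := by
    nlinarith [W_mul_centralBinomProb_sq n,
      mul_le_mul_of_nonneg_right (W_le n)
        (by positivity : (0 : ℝ) ≤ (2 * n + 1) * centralBinomProb n ^ 2)]
  rw [div_le_iff₀ (by positivity)]
  nlinarith [mul_le_mul_of_nonneg_left h n.cast_nonneg]

theorem mul_pi_mul_centralBinomProb_sq_le_one (n : ℕ) :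
    n * π * centralBinomProb n ^ 2 ≤ 1 := by
  have h : (2 * n + 1) ^ 2 * (π * centralBinomProb n ^ 2) ≤ 4 * (n + 1) := by
    have := mul_le_mul_of_nonneg_right (le_W n)
      (by positivity : (0 : ℝ) ≤ (2 * n + 1) * centralBinomProb n ^ 2)
    rw [W_mul_centralBinomProb_sq n] at this
    field_simp at this
    linarith
  nlinarith [mul_le_mul_of_nonneg_left h n.cast_nonneg, pi_pos, sq_nonneg (centralBinomProb n)]

theorem one_div_sqrt_one_add_one_div {x : ℝ} (hx : 0 < x) :
    1 / √(1 + 1 / x) = √(x / (x + 1)) := by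
  rw [one_div, ← sqrt_inv]
  congr 1
  field_simp

theorem stmt_13 (n : ℕ) (hn : 1 ≤ n) :
    1 / Real.sqrt (1 + 1 / (2 * n : ℝ)) ≤
      Real.sqrt ((n : ℝ) * Real.pi) * (((2 * n).choose n : ℝ) / 4 ^ n) ∧
    Real.sqrt ((n : ℝ) * Real.pi) * (((2 * n).choose n : ℝ) / 4 ^ n) ≤ 1 := by
  have hsqrt : √(n * π) * centralBinomProb n = √(n * π * centralBinomProb n ^ 2) := by
    rw [sqrt_mul' _ (sq_nonneg _), sqrt_sq (centralBinomProb_pos n).le]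
  rw [← centralBinomProb, hsqrt, one_div_sqrt_one_add_one_div (by positivity)]
  exact ⟨sqrt_le_sqrt (two_mul_div_le_mul_pi_mul_centralBinomProb_sq n),
    sqrt_le_one.mpr (mul_pi_mul_centralBinomProb_sq_le_one n)⟩
end

section
/- Let x > 0 and let n ≥ max(x², 1) be an integer. Let S_{2n} be a Binomial(2n, 1/2) random variable. Then P(|S_{2n} - n| < x√(n/2)) ≤ ∫_{-x}^{x} e^{-s²/2} ds/√(2π) + e^{(x³+2)/(2√(2n))} - 1. -/
/-!
The ratio of consecutive binomial coefficients, `C(2n, n+j+1) / C(2n, n+j) = (n-j)/(n+j+1)`, is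
at most the exponential of the increment of `-j²/n + j³/n²`, so
`C(2n, n+j)/4ⁿ ≤ C(2n, n)/4ⁿ · exp(-j²/n + j³/n²)`, and Wallis' product bounds `C(2n, n)/4ⁿ` by
`1/√(πn)`. For `|j| < x√(n/2)` the cubic term is at most `x³/(2√(2n))`. Since `exp(-u²/n)`
decreases away from `0`, its sum over the integers in `(-x√(n/2), x√(n/2))` is at most `1` plus
its integral over that interval, which rescales to `√(n/2) ∫_{-x}^{x} exp(-s²/2) ds`. What is
left, the term `1/√(πn)` and the factor `exp(x³/(2√(2n)))`, is absorbed into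
`exp((x³+2)/(2√(2n))) - 1` because `1/√(πn) ≤ 1/√(2n)` and the Gaussian mass of `[-x, x]` is at
most `1`.
-/

open Real Finset
open scoped Nat

lemma sq_centralBinom_div_four_pow_mul_W (n : ℕ) :
    ((n.centralBinom : ℝ) / 4 ^ n) ^ 2 * (Wallis.W n * (2 * n + 1)) = 1 := by
  have hfact : (n.centralBinom : ℝ) * n ! * n ! = (2 * n)! := by
    have := Nat.choose_mul_factorial_mul_factorial (by omega : n ≤ 2 * n)
    rw [show 2 * n - n = n by omega, ← Nat.centralBinom_eq_two_mul_choose] at this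
    exact_mod_cast this
  have hpow : (2 : ℝ) ^ (4 * n) = 4 ^ n * 4 ^ n := by
    rw [← pow_add, show (4 : ℝ) = 2 ^ 2 by norm_num, ← pow_mul]; ring_nf
  have hc : (n.centralBinom : ℝ) ≠ 0 := by exact_mod_cast n.centralBinom_ne_zero
  rw [Wallis.W_eq_factorial_ratio, hpow, ← hfact]
  field_simp

lemma centralBinom_div_four_pow_le {n : ℕ} (hn : 0 < n) :
    (n.centralBinom : ℝ) / 4 ^ n ≤ 1 / √(π * n) := by
  set a : ℝ := n.centralBinom / 4 ^ n
  have hW : a ^ 2 * ((2 * n + 1) / (2 * n + 2) * (π / 2) * (2 * n + 1)) ≤ 1 :=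
    (sq_centralBinom_div_four_pow_mul_W n).le.trans' <| by gcongr; exact Wallis.le_W n
  have hπn : π * n ≤ (2 * n + 1) / (2 * n + 2) * (π / 2) * (2 * n + 1) := by
    rw [div_mul_eq_mul_div, div_mul_eq_mul_div, le_div_iff₀ (by positivity)]
    nlinarith [pi_pos]
  rw [← sqrt_one, ← sqrt_div zero_le_one, le_sqrt (by positivity) (by positivity),
    le_div_iff₀ (by positivity)]
  exact (mul_le_mul_of_nonneg_left hπn (sq_nonneg a)).trans hW

lemma sub_div_add_add_one_le_exp {n j : ℝ} (hn : 0 < n) (hj : 0 ≤ j) :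
    (n - j) / (n + j + 1) ≤
      exp ((-(j + 1) ^ 2 / n + (j + 1) ^ 3 / n ^ 2) - (-j ^ 2 / n + j ^ 3 / n ^ 2)) := by
  have hexp : -((2 * j + 1) / (n + j + 1)) ≤
      (-(j + 1) ^ 2 / n + (j + 1) ^ 3 / n ^ 2) - (-j ^ 2 / n + j ^ 3 / n ^ 2) := by
    have hgap : (-(j + 1) ^ 2 / n + (j + 1) ^ 3 / n ^ 2) - (-j ^ 2 / n + j ^ 3 / n ^ 2) +
        (2 * j + 1) / (n + j + 1) =
          (j ^ 2 * n + (3 * j ^ 2 + 3 * j + 1) * (j + 1)) / (n ^ 2 * (n + j + 1)) := by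
      field_simp; ring
    have : 0 ≤ (j ^ 2 * n + (3 * j ^ 2 + 3 * j + 1) * (j + 1)) / (n ^ 2 * (n + j + 1)) := by
      positivity
    linarith
  calc (n - j) / (n + j + 1) = 1 - (2 * j + 1) / (n + j + 1) := by field_simp; ring
    _ ≤ exp (-((2 * j + 1) / (n + j + 1))) := one_sub_le_exp_neg _
    _ ≤ _ := exp_le_exp.mpr hexp

lemma choose_two_mul_add_le {n : ℕ} (hn : 0 < n) {j : ℕ} (hj : j ≤ n) :
    ((2 * n).choose (n + j) : ℝ) ≤ n.centralBinom * exp (-j ^ 2 / n + j ^ 3 / n ^ 2) := by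
  induction j with
  | zero => simp [Nat.centralBinom_eq_two_mul_choose]
  | succ j ih =>
    have hstep : ((2 * n).choose (n + j + 1) : ℝ) =
        (2 * n).choose (n + j) * ((n - j) / (n + j + 1)) := by
      have h := Nat.choose_succ_right_eq (2 * n) (n + j)
      rw [show 2 * n - (n + j) = n - j by omega] at h
      have hR : ((2 * n).choose (n + j + 1) : ℝ) * (n + j + 1) =
          (2 * n).choose (n + j) * (n - j) := by
        rw [← Nat.cast_sub (by omega : j ≤ n)]; exact_mod_cast h
      rw [mul_div_assoc', eq_div_iff (by positivity), hR]
    have hnR : (0 : ℝ) < n := by exact_mod_cast hn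
    calc ((2 * n).choose (n + (j + 1)) : ℝ)
        = (2 * n).choose (n + j) * ((n - j) / (n + j + 1)) := hstep
      _ ≤ n.centralBinom * exp (-j ^ 2 / n + j ^ 3 / n ^ 2) *
          exp ((-(j + 1) ^ 2 / n + (j + 1) ^ 3 / n ^ 2) - (-j ^ 2 / n + j ^ 3 / n ^ 2)) := by
        gcongr ?_ * ?_
        · have : (j : ℝ) ≤ n := by exact_mod_cast hj.trans' j.le_succ
          exact div_nonneg (by linarith) (by positivity)
        · exact ih (by omega)
        · exact sub_div_add_add_one_le_exp hnR j.cast_nonneg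
      _ = n.centralBinom *
          exp (-((j + 1 : ℕ) : ℝ) ^ 2 / n + ((j + 1 : ℕ) : ℝ) ^ 3 / n ^ 2) := by
        rw [mul_assoc, ← exp_add]; push_cast; ring_nf

lemma exists_choose_two_mul_eq_choose_add {n k : ℕ} (hk : k ≤ 2 * n) :
    ∃ j ≤ n, (2 * n).choose k = (2 * n).choose (n + j) ∧ |(k : ℝ) - n| = j := by
  rcases le_total n k with h | h
  · refine ⟨k - n, by omega, by rw [Nat.add_sub_cancel' h], ?_⟩
    rw [Nat.cast_sub h, abs_of_nonneg (sub_nonneg.mpr (by exact_mod_cast h))]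
  · refine ⟨n - k, by omega, ?_, ?_⟩
    · rw [show n + (n - k) = 2 * n - k by omega, Nat.choose_symm hk]
    · rw [Nat.cast_sub h, abs_sub_comm, abs_of_nonneg (sub_nonneg.mpr (by exact_mod_cast h))]

lemma choose_two_mul_div_four_pow_le {n k : ℕ} (hn : 0 < n) (hk : k ≤ 2 * n) :
    ((2 * n).choose k : ℝ) / 4 ^ n ≤
      exp (|(k : ℝ) - n| ^ 3 / n ^ 2) / √(π * n) * exp (-((k : ℝ) - n) ^ 2 / n) := by
  obtain ⟨j, hjn, hchoose, hj⟩ := exists_choose_two_mul_eq_choose_add hk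
  rw [hchoose, ← sq_abs ((k : ℝ) - n), hj]
  calc ((2 * n).choose (n + j) : ℝ) / 4 ^ n
      ≤ n.centralBinom / 4 ^ n * exp (-j ^ 2 / n + j ^ 3 / n ^ 2) := by
        rw [div_mul_eq_mul_div]; gcongr; exact choose_two_mul_add_le hn hjn
    _ ≤ 1 / √(π * n) * exp (-j ^ 2 / n + j ^ 3 / n ^ 2) := by
        gcongr ?_ * _; exact centralBinom_div_four_pow_le hn
    _ = _ := by rw [exp_add]; ring

lemma pow_three_div_sq_le {n x j : ℝ} (hn : 0 < n) (hj : 0 ≤ j) (hjx : j ≤ x * √(n / 2)) :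
    j ^ 3 / n ^ 2 ≤ x ^ 3 / (2 * √(2 * n)) := by
  have hmul : √(n / 2) * √(2 * n) = n := by
    rw [← sqrt_mul (by positivity), show n / 2 * (2 * n) = n ^ 2 by ring, sqrt_sq hn.le]
  have hsq : √(n / 2) ^ 2 = n / 2 := sq_sqrt (by positivity)
  calc j ^ 3 / n ^ 2 ≤ (x * √(n / 2)) ^ 3 / n ^ 2 := by gcongr
    _ = x ^ 3 / (2 * √(2 * n)) := by
      rw [div_eq_div_iff (by positivity) (by positivity)]
      linear_combination (x ^ 3 * n) * hmul + (2 * x ^ 3 * √(n / 2) * √(2 * n)) * hsq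

section SumIntegral

variable {g : ℝ → ℝ} {R : ℝ}

lemma sum_range_ite_le_integral (hR : 0 ≤ R) (hg : AntitoneOn g (Set.Ici 0))
    (hg0 : ∀ u, 0 ≤ g u) (N : ℕ) :
    ∑ i ∈ range N, (if (i + 1 : ℝ) < R then g (i + 1) else 0) ≤ ∫ u in 0..R, g u := by
  set M := ⌊R⌋₊
  have hsub : (range N).filter (fun i : ℕ => (i + 1 : ℝ) < R) ⊆ range M := fun i hi => by
    have : i + 1 ≤ M := Nat.le_floor (by exact_mod_cast (mem_filter.mp hi).2.le)
    exact mem_range.mpr this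
  calc ∑ i ∈ range N, (if (i + 1 : ℝ) < R then g (i + 1) else 0)
      = ∑ i ∈ (range N).filter (fun i : ℕ => (i + 1 : ℝ) < R), g (i + 1) :=
        (sum_filter _ _).symm
    _ ≤ ∑ i ∈ range M, g (i + 1) := sum_le_sum_of_subset_of_nonneg hsub fun _ _ _ => hg0 _
    _ ≤ ∫ u in 0..(M : ℝ), g u := by
      simpa using (hg.mono Set.Icc_subset_Ici_self).sum_le_integral (x₀ := 0) (a := M)
    _ ≤ ∫ u in 0..R, g u :=
      intervalIntegral.integral_mono_interval le_rfl M.cast_nonneg (Nat.floor_le hR)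
        (MeasureTheory.ae_of_all _ hg0)
        (hg.mono (by simp [Set.uIcc_of_le hR, Set.Icc_subset_Ici_self])).intervalIntegrable

lemma integral_neg_self_eq_two_mul (hR : 0 ≤ R) (hg : AntitoneOn g (Set.Ici 0))
    (hg_even : ∀ u, g (-u) = g u) :
    ∫ u in -R..R, g u = 2 * ∫ u in 0..R, g u := by
  have hpos : IntervalIntegrable g MeasureTheory.volume 0 R :=
    (hg.mono (by simp [Set.uIcc_of_le hR, Set.Icc_subset_Ici_self])).intervalIntegrable
  have hneg : IntervalIntegrable g MeasureTheory.volume (-R) 0 := by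
    refine MonotoneOn.intervalIntegrable fun a ha b hb hab => ?_
    simp only [Set.uIcc_of_le (neg_nonpos.mpr hR), Set.mem_Icc] at ha hb
    rw [← hg_even a, ← hg_even b]
    exact hg (by simp; linarith) (by simp; linarith) (neg_le_neg hab)
  have hsymm : ∫ u in -R..0, g u = ∫ u in 0..R, g u := by
    simpa [hg_even] using intervalIntegral.integral_comp_neg (a := -R) (b := 0) g
  rw [← intervalIntegral.integral_add_adjacent_intervals hneg hpos, hsymm, two_mul]

lemma sum_range_ite_abs_sub_le (hR : 0 ≤ R) (hg : AntitoneOn g (Set.Ici 0))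
    (hg0 : ∀ u, 0 ≤ g u) (hg_even : ∀ u, g (-u) = g u) (N : ℕ) :
    ∑ k ∈ range (2 * N + 1), (if |(k : ℝ) - N| < R then g (k - N) else 0) ≤
      g 0 + ∫ u in -R..R, g u := by
  set F : ℕ → ℝ := fun k => if |(k : ℝ) - N| < R then g (k - N) else 0
  set G : ℕ → ℝ := fun i => if (i + 1 : ℝ) < R then g (i + 1) else 0
  have hlow : ∀ i ∈ range N, F (N - 1 - i) = G i := fun i hi => by
    have hcast : ((N - 1 - i : ℕ) : ℝ) - N = -(i + 1) := by
      rw [Nat.sub_sub, Nat.cast_sub (by simp at hi; omega)]; push_cast; ring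
    simp only [F, G, hcast, abs_neg, hg_even, abs_of_nonneg (by positivity : (0 : ℝ) ≤ i + 1)]
  have hup : ∀ i ∈ range N, F (N + (i + 1)) = G i := fun i _ => by
    simp only [F, G]; push_cast
    rw [add_sub_cancel_left, abs_of_nonneg (by positivity)]
  have hmid : F N ≤ g 0 := by
    simp only [F, sub_self]; split_ifs <;> simp [hg0]
  calc ∑ k ∈ range (2 * N + 1), F k
      = ∑ k ∈ range N, F k + (∑ i ∈ range N, F (N + (i + 1)) + F N) := by
        rw [show 2 * N + 1 = N + (N + 1) by ring, sum_range_add, sum_range_succ']; rfl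
    _ = ∑ i ∈ range N, G i + (∑ i ∈ range N, G i + F N) := by
        rw [← sum_range_reflect, sum_congr rfl hlow, sum_congr rfl hup]
    _ ≤ (∫ u in 0..R, g u) + ((∫ u in 0..R, g u) + g 0) := by
        have hG := sum_range_ite_le_integral hR hg hg0 N
        exact add_le_add hG (add_le_add hG hmid)
    _ = g 0 + ∫ u in -R..R, g u := by
        rw [integral_neg_self_eq_two_mul hR hg hg_even]; ring

end SumIntegral

lemma integral_exp_neg_sq_div_two_le {x : ℝ} (hx : 0 ≤ x) :
    ∫ s in -x..x, exp (-s ^ 2 / 2) ≤ √(2 * π) := by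
  have hform : (fun s : ℝ => exp (-s ^ 2 / 2)) = fun s => exp (-(1 / 2) * s ^ 2) := by
    ext s; ring_nf
  have htotal : ∫ s, exp (-s ^ 2 / 2) = √(2 * π) := by
    rw [hform, integral_gaussian]; congr 1; field_simp
  rw [intervalIntegral.integral_of_le (by linarith), ← htotal]
  refine MeasureTheory.setIntegral_le_integral ?_ (.of_forall fun _ => (exp_pos _).le)
  rw [hform]; exact integrable_exp_neg_mul_sq (by norm_num)

lemma integral_exp_neg_sq_div_eq {n : ℝ} (hn : 0 < n) (x : ℝ) :
    ∫ u in -(x * √(n / 2))..x * √(n / 2), exp (-u ^ 2 / n) =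
      √(n / 2) * ∫ s in -x..x, exp (-s ^ 2 / 2) := by
  have h := intervalIntegral.smul_integral_comp_mul_left (fun u => exp (-u ^ 2 / n)) (√(n / 2))
    (a := -x) (b := x)
  have hsq : √(n / 2) ^ 2 = n / 2 := sq_sqrt (by positivity)
  simp only [smul_eq_mul, mul_pow, hsq] at h
  rw [mul_comm x, neg_mul_eq_mul_neg, ← h]
  congr 1
  refine intervalIntegral.integral_congr fun s _ => ?_
  field_simp

lemma exp_mul_add_le {a b c A : ℝ} (ha : 0 ≤ a) (hbc : b ≤ c) (hA : A ≤ 1) :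
    exp a * (b + A) ≤ A + exp (a + c) - 1 := by
  have hb : exp a * b ≤ exp a * (exp c - 1) := by
    gcongr; linarith [add_one_le_exp c]
  have hA' : 0 ≤ (exp a - 1) * (1 - A) :=
    mul_nonneg (by linarith [one_le_exp ha]) (by linarith)
  rw [exp_add]
  nlinarith

lemma sum_ite_choose_two_mul_div_four_pow_le {n : ℕ} (hn : 0 < n) (x : ℝ) :
    (∑ k ∈ range (2 * n + 1),
        if |(k : ℝ) - n| < x * √((n : ℝ) / 2) then ((2 * n).choose k : ℝ) / 4 ^ n
        else 0) ≤
      exp (x ^ 3 / (2 * √(2 * n))) / √(π * n) * ∑ k ∈ range (2 * n + 1),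
        if |(k : ℝ) - n| < x * √((n : ℝ) / 2) then exp (-((k : ℝ) - n) ^ 2 / n) else 0 := by
  have hnR : (0 : ℝ) < n := by exact_mod_cast hn
  rw [mul_sum]
  refine sum_le_sum fun k hk => ?_
  split_ifs with hkx
  · refine (choose_two_mul_div_four_pow_le hn (by simp at hk; omega)).trans ?_
    gcongr exp ?_ / _ * _
    exact pow_three_div_sq_le hnR (abs_nonneg _) hkx.le
  · simp

lemma sum_ite_exp_neg_sq_le {n : ℕ} (hn : 0 < n) {x : ℝ} (hx : 0 ≤ x) :
    (∑ k ∈ range (2 * n + 1),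
        if |(k : ℝ) - n| < x * √((n : ℝ) / 2) then exp (-((k : ℝ) - n) ^ 2 / n) else 0) ≤
      1 + √((n : ℝ) / 2) * ∫ s in -x..x, exp (-s ^ 2 / 2) := by
  have hnR : (0 : ℝ) < n := by exact_mod_cast hn
  have hanti : AntitoneOn (fun u : ℝ => exp (-u ^ 2 / n)) (Set.Ici 0) := fun a ha b hb hab => by
    simp only [Set.mem_Ici] at ha hb ⊢
    gcongr
  have h := sum_range_ite_abs_sub_le (R := x * √((n : ℝ) / 2)) (by positivity) hanti
    (fun _ => (exp_pos _).le) (fun _ => by simp) n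
  rwa [integral_exp_neg_sq_div_eq hnR, sq, mul_zero, neg_zero, zero_div, exp_zero] at h

theorem stmt_16_general (x : ℝ) (hx : 0 < x) (n : ℕ) (hn1 : 1 ≤ n) :
    (∑ k ∈ Finset.range (2 * n + 1),
        if |(k : ℝ) - n| < x * Real.sqrt ((n : ℝ) / 2) then
          ((2 * n).choose k : ℝ) / 4 ^ n else 0) ≤
      (∫ s in (-x)..x, Real.exp (-s ^ 2 / 2)) / Real.sqrt (2 * Real.pi) +
        Real.exp ((x ^ 3 + 2) / (2 * Real.sqrt (2 * n))) - 1 := by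
  have hn : (0 : ℝ) < n := by exact_mod_cast hn1
  set I := ∫ s in (-x)..x, exp (-s ^ 2 / 2)
  set t := x ^ 3 / (2 * √(2 * n))
  have hscale : √((n : ℝ) / 2) / √(π * n) = 1 / √(2 * π) := by
    rw [← sqrt_div (by positivity), one_div, ← sqrt_inv]
    congr 1; field_simp
  calc _ ≤ exp t / √(π * n) * ∑ k ∈ range (2 * n + 1),
        if |(k : ℝ) - n| < x * √((n : ℝ) / 2) then exp (-((k : ℝ) - n) ^ 2 / n) else 0 :=
        sum_ite_choose_two_mul_div_four_pow_le hn1 x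
    _ ≤ exp t / √(π * n) * (1 + √((n : ℝ) / 2) * I) := by
        gcongr; exact sum_ite_exp_neg_sq_le hn1 hx.le
    _ = exp t * (1 / √(π * n) + I / √(2 * π)) := by
        rw [div_eq_mul_one_div I, ← hscale]; ring
    _ ≤ I / √(2 * π) + exp (t + 1 / √(2 * n)) - 1 := by
        refine exp_mul_add_le (by positivity) ?_ ((div_le_one (by positivity)).mpr
          (integral_exp_neg_sq_div_two_le hx.le))
        gcongr
        nlinarith [pi_gt_three]
    _ = _ := by congr 3; simp only [t]; field_simp

theorem stmt_16 (x : ℝ) (hx : 0 < x) (n : ℕ) (hn1 : 1 ≤ n) (hnx : x ^ 2 ≤ (n : ℝ)) :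
    (∑ k ∈ Finset.range (2 * n + 1),
        if |(k : ℝ) - n| < x * Real.sqrt ((n : ℝ) / 2) then
          ((2 * n).choose k : ℝ) / 4 ^ n else 0) ≤
      (∫ s in (-x)..x, Real.exp (-s ^ 2 / 2)) / Real.sqrt (2 * Real.pi) +
        Real.exp ((x ^ 3 + 2) / (2 * Real.sqrt (2 * n))) - 1 :=
  stmt_16_general x hx n hn1
end
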